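/- Let v(x) = 2i e^{iα} on (0,1) and v ≡ 0 outside [0,1], with α ∈ ℝ. Then the function ψ₀(x) = 2e^{iα}(1−x) for x ∈ (0,1), ψ₀ ≡ 0 outside [0,1], satisfies i·ψ₀'(x) + v(x)·[½ψ₀(0⁻) + ½e^{−iα}ψ₀(0⁺)] = 0 for x ∉ {0}, and the boundary condition i·ψ₀(0⁻) − i·e^{−iα}ψ₀(0⁺) = ⟨ψ₀, v⟩_{L²}, where ψ₀(0⁻)=0 and ψ₀(0⁺)=2e^{iα}. In particular λ = 0 is an eigenvalue of A(v,α). -/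

import Mathlib

/-!
On `(0, 1)` the function `ψ₀` is the ramp `2e(1 - x)`, `e = exp(iα)`, so `i ψ₀' = -2ie`, which is
cancelled by `v · ½ e⁻¹ · 2e = 2ie`; off `[0, 1]` both terms vanish, and at the kink `x = 1` the
one-sided derivatives `-2e` and `0` differ, so `deriv ψ₀ 1` is Lean's junk value `0` while `v 1 = 0`.
The boundary condition reduces to `∫₀¹ (1 - x) dx = 1/2`, using `conj e · e = 1`.
-/

open Complex MeasureTheory Set Filter Topology

section Indicator

variable {E : Type*} [NormedAddCommGroup E] [NormedSpace ℝ E] {f : ℝ → E} {a b x : ℝ}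

theorem deriv_indicator_Ioo_of_mem (hx : x ∈ Ioo a b) :
    deriv ((Ioo a b).indicator f) x = deriv f x :=
  (eventuallyEq_of_mem (isOpen_Ioo.mem_nhds hx) fun _ hy => indicator_of_mem hy f).deriv_eq

theorem deriv_indicator_Ioo_of_notMem_Icc (hx : x ∉ Icc a b) :
    deriv ((Ioo a b).indicator f) x = 0 := by
  have hzero : (Ioo a b).indicator f =ᶠ[𝓝 x] fun _ => 0 :=
    eventuallyEq_of_mem (isClosed_Icc.isOpen_compl.mem_nhds hx) fun _ hy =>
      indicator_of_notMem (fun h => hy (Ioo_subset_Icc_self h)) f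
  rw [hzero.deriv_eq, deriv_const]

theorem not_differentiableAt_of_hasDerivWithinAt_Iic_Ici {d₁ d₂ : E}
    (h₁ : HasDerivWithinAt f d₁ (Iic x) x) (h₂ : HasDerivWithinAt f d₂ (Ici x) x)
    (hne : d₁ ≠ d₂) : ¬ DifferentiableAt ℝ f x := fun hf => by
  have hd := hf.hasDerivAt
  exact hne <| ((uniqueDiffWithinAt_Iic x).eq_deriv _ h₁ hd.hasDerivWithinAt).trans
    ((uniqueDiffWithinAt_Ici x).eq_deriv _ hd.hasDerivWithinAt h₂)

theorem not_differentiableAt_indicator_Ioo_right {d : E} (hab : a < b) (hf : HasDerivAt f d b)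
    (hfb : f b = 0) (hd : d ≠ 0) : ¬ DifferentiableAt ℝ ((Ioo a b).indicator f) b := by
  have hb : b ∉ Ioo a b := fun h => h.2.false
  refine not_differentiableAt_of_hasDerivWithinAt_Iic_Ici (d₂ := 0) ?_ ?_ hd
  · refine hf.hasDerivWithinAt.congr_of_eventuallyEq ?_ (by rw [indicator_of_notMem hb, hfb])
    filter_upwards [Ioc_mem_nhdsLE hab] with y hy
    rcases hy.2.eq_or_lt with rfl | hyb
    · rw [indicator_of_notMem hb, hfb]
    · exact indicator_of_mem (show y ∈ Ioo a b from ⟨hy.1, hyb⟩) f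
  · exact (hasDerivWithinAt_const b _ 0).congr
      (fun y hy => indicator_of_notMem (fun h => (not_lt.2 hy) h.2) f) (indicator_of_notMem hb f)

end Indicator

theorem deriv_indicator_Ioo_zero_one_mul_one_sub (c : ℂ) {x : ℝ} (hx : x ≠ 0) :
    deriv ((Ioo 0 1).indicator fun y : ℝ => c * (1 - y)) x = (Ioo 0 1).indicator (fun _ => -c) x := by
  have hramp : ∀ y : ℝ, HasDerivAt (fun y : ℝ => c * (1 - y)) (-c) y := fun y => by
    simpa using ((hasDerivAt_const y (1 : ℂ)).sub (ofRealCLM.hasDerivAt (x := y))).const_mul c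
  by_cases hmem : x ∈ Ioo 0 1
  · rw [deriv_indicator_Ioo_of_mem hmem, (hramp x).deriv, indicator_of_mem hmem]
  rw [indicator_of_notMem hmem]
  by_cases hx1 : x = 1
  · subst hx1
    by_cases hc : c = 0
    · simp [hc]
    exact deriv_zero_of_not_differentiableAt <|
      not_differentiableAt_indicator_Ioo_right one_pos (hramp 1) (by simp) (neg_ne_zero.2 hc)
  · refine deriv_indicator_Ioo_of_notMem_Icc fun hIcc => hmem ⟨?_, ?_⟩
    · exact lt_of_le_of_ne hIcc.1 (Ne.symm hx)
    · exact lt_of_le_of_ne hIcc.2 hx1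

theorem integral_indicator_Ioo_zero_one_mul_one_sub (c : ℂ) :
    ∫ x, (Ioo 0 1).indicator (fun y : ℝ => c * (1 - y)) x = c / 2 := by
  rw [integral_indicator measurableSet_Ioo, ← integral_Ioc_eq_integral_Ioo,
    ← intervalIntegral.integral_of_le zero_le_one, intervalIntegral.integral_const_mul]
  have hhalf : ∫ y in (0 : ℝ)..1, (1 - (y : ℂ)) = 1 / 2 := by
    rw [intervalIntegral.integral_sub intervalIntegrable_const
      (continuous_ofReal.intervalIntegrable _ _), intervalIntegral.integral_ofReal, integral_id]
    norm_num
  rw [hhalf]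
  ring

theorem stmt_13 (α : ℝ)
    (v : ℝ → ℂ) (hv : ∀ x : ℝ, v x = if x ∈ Set.Ioo (0 : ℝ) 1 then 2 * Complex.I * Complex.exp (Complex.I * α) else 0)
    (ψ₀ : ℝ → ℂ)
    (hψ₀ : ∀ x : ℝ, ψ₀ x = if x ∈ Set.Ioo (0 : ℝ) 1 then 2 * Complex.exp (Complex.I * α) * (1 - x) else 0) :
    (∀ x : ℝ, x ≠ 0 →
        Complex.I * deriv ψ₀ x +
          v x * ((1 / 2) * 0 + (1 / 2) * Complex.exp (-(Complex.I * α)) *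
            (2 * Complex.exp (Complex.I * α))) = 0) ∧
    (Complex.I * 0 - Complex.I * Complex.exp (-(Complex.I * α)) * (2 * Complex.exp (Complex.I * α))
        = ∫ x : ℝ, ψ₀ x * (starRingEnd ℂ) (v x)) := by
  have hψ : ψ₀ = (Ioo 0 1).indicator fun x : ℝ => 2 * exp (I * α) * (1 - x) :=
    funext fun x => by rw [hψ₀, indicator_apply]
  have hexp : exp (-(I * α)) * exp (I * α) = 1 := by rw [← exp_add, neg_add_cancel, exp_zero]
  have hconj : starRingEnd ℂ (exp (I * α)) = exp (-(I * α)) := by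
    rw [← exp_conj, map_mul, conj_I, conj_ofReal, neg_mul]
  refine ⟨fun x hx => ?_, ?_⟩
  · rw [hψ, deriv_indicator_Ioo_zero_one_mul_one_sub _ hx, hv, indicator_apply]
    split_ifs
    · linear_combination 2 * I * exp (I * α) * hexp
    · ring
  · have hintegrand : (fun x => ψ₀ x * starRingEnd ℂ (v x))
        = (Ioo 0 1).indicator fun x : ℝ => -4 * I * (1 - x) := funext fun x => by
      rw [hψ₀, hv, indicator_apply]
      split_ifs
      · simp only [map_mul, map_ofNat, conj_I, hconj]
        linear_combination -4 * I * (1 - (x : ℂ)) * hexp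
      · ring
    rw [hintegrand, integral_indicator_Ioo_zero_one_mul_one_sub]
    linear_combination -2 * I * hexp
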